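/- Parallel composition of modules is associative up to mutual implementation: if M₁, M₂, M₃ are pairwise compatible modules (and the relevant compositions are defined), then (M₁ ∥ M₂) ∥ M₃ ≅ M₁ ∥ (M₂ ∥ M₃). -/

import Mathlib

open Classical

/-- A reactive module over variables `Var` with domains `Dom`. -/
structure RModule (Var : Type) (Dom : Var → Type) where
  I : Set Var
  O : Set Var
  S : Set Var
  Init : (∀ v ∈ S, Dom v) → Prop
  React : (∀ v ∈ S, Dom v) → (∀ v ∈ I, Dom v) → (∀ v ∈ O, Dom v) → (∀ v ∈ S, Dom v) → Prop

variable {Var : Type} {Dom : Var → Type}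

/-- `t` is a trace of `M`: a sequence of input/output valuations arising from an
execution starting in an initial state. -/
def RModule.Trace (M : RModule Var Dom) (t : ℕ → ∀ v ∈ M.I ∪ M.O, Dom v) : Prop :=
  ∃ s : ℕ → ∀ v ∈ M.S, Dom v,
    M.Init (s 0) ∧
    ∀ j, M.React (s j) (fun v hv => t j v (Set.mem_union_left _ hv))
      (fun v hv => t j v (Set.mem_union_right _ hv)) (s (j+1))

/-- `M` implements `N`: interface inclusions and trace containment under projection. -/
def Implements (M N : RModule Var Dom) : Prop :=
  N.O ⊆ M.O ∧ N.I ⊆ M.I ∪ M.O ∧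
  ∀ t, M.Trace t →
    ∃ t', N.Trace t' ∧
      ∀ j v (hv : v ∈ N.I ∪ N.O) (hv' : v ∈ M.I ∪ M.O), t' j v hv = t j v hv'

/-- Parallel composition of two modules: merged variables, conjunction of reactions. -/
noncomputable def PC (M₁ M₂ : RModule Var Dom) : RModule Var Dom where
  I := (M₁.I ∪ M₂.I) \ (M₁.O ∪ M₂.O)
  O := M₁.O ∪ M₂.O
  S := M₁.S ∪ M₂.S
  Init := fun s => M₁.Init (fun v hv => s v (Set.mem_union_left _ hv)) ∧
                   M₂.Init (fun v hv => s v (Set.mem_union_right _ hv))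
  React := fun s i o s' =>
    (M₁.React (fun v hv => s v (Set.mem_union_left _ hv))
      (fun v hv => if h : v ∈ M₁.O ∪ M₂.O then o v h
                   else i v ⟨Set.mem_union_left _ hv, h⟩)
      (fun v hv => o v (Set.mem_union_left _ hv))
      (fun v hv => s' v (Set.mem_union_left _ hv))) ∧
    (M₂.React (fun v hv => s v (Set.mem_union_right _ hv))
      (fun v hv => if h : v ∈ M₁.O ∪ M₂.O then o v h
                   else i v ⟨Set.mem_union_right _ hv, h⟩)
      (fun v hv => o v (Set.mem_union_right _ hv))
      (fun v hv => s' v (Set.mem_union_right _ hv)))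

/-- Compatibility: disjoint outputs and disjoint states. -/
def Compatible (M₁ M₂ : RModule Var Dom) : Prop :=
  M₁.O ∩ M₂.O = ∅ ∧ M₁.S ∩ M₂.S = ∅

/-- Hiding a set `O'` of output variables. -/
def Hide (M : RModule Var Dom) (O' : Set Var) : RModule Var Dom where
  I := M.I
  O := M.O \ O'
  S := M.S
  Init := M.Init
  React := fun s i o s' =>
    ∃ oe : ∀ v ∈ M.O, Dom v,
      (∀ v (hv : v ∈ M.O \ O'), oe v hv.1 = o v hv) ∧ M.React s i oe s'

/-- Parallel composition of a family of modules. -/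
noncomputable def PCfam {ι : Type} (Ms : ι → RModule Var Dom) : RModule Var Dom where
  I := (⋃ j, (Ms j).I) \ ⋃ j, (Ms j).O
  O := ⋃ j, (Ms j).O
  S := ⋃ j, (Ms j).S
  Init := fun s => ∀ j, (Ms j).Init (fun v hv => s v (Set.mem_iUnion.2 ⟨j, hv⟩))
  React := fun s i o s' => ∀ j,
    (Ms j).React (fun v hv => s v (Set.mem_iUnion.2 ⟨j, hv⟩))
      (fun v hv => if h : v ∈ ⋃ k, (Ms k).O then o v h
                   else i v ⟨Set.mem_iUnion.2 ⟨j, hv⟩, h⟩)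
      (fun v hv => o v (Set.mem_iUnion.2 ⟨j, hv⟩))
      (fun v hv => s' v (Set.mem_iUnion.2 ⟨j, hv⟩))

/-- The empty module `M_⊤`. -/
def Mtop : RModule Var Dom where
  I := ∅
  O := ∅
  S := ∅
  Init := fun _ => True
  React := fun _ _ _ _ => True

/-!
Both bracketings have the same outputs, states and interface variables, and each reaction
of either is the conjunction of the three component reactions, every component input being
read off the same valuation of the interface (from the composite's outputs or inputs,
whichever supplies it). So a run of one composite, restricted to the other's variables, is
literally a run of the other.
-/
def restrictVal {A B : Set Var} (h : A ⊆ B) (x : ∀ v ∈ B, Dom v) : ∀ v ∈ A, Dom v :=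
  fun v hv => x v (h hv)

def RModule.Step (M : RModule Var Dom) (s : ∀ v ∈ M.S, Dom v) (x : ∀ v ∈ M.I ∪ M.O, Dom v)
    (s' : ∀ v ∈ M.S, Dom v) : Prop :=
  M.React s (fun v hv => x v (Set.mem_union_left _ hv)) (fun v hv => x v (Set.mem_union_right _ hv))
    s'

theorem Implements.of_restrict {M N : RModule Var Dom} (hO : N.O ⊆ M.O)
    (hIO : N.I ∪ N.O ⊆ M.I ∪ M.O) (hS : N.S ⊆ M.S)
    (hInit : ∀ s, M.Init s → N.Init (restrictVal hS s))
    (hStep : ∀ s x s', M.Step s x s' →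
      N.Step (restrictVal hS s) (restrictVal hIO x) (restrictVal hS s')) :
    Implements M N :=
  ⟨hO, Set.subset_union_left.trans hIO, fun t ⟨s, hs₀, hs⟩ =>
    ⟨fun j => restrictVal hIO (t j),
      ⟨fun j => restrictVal hS (s j), hInit _ hs₀, fun j => hStep _ _ _ (hs j)⟩,
      fun _ _ _ _ => rfl⟩⟩

namespace PC

theorem inputs_union_outputs (M₁ M₂ : RModule Var Dom) :
    (PC M₁ M₂).I ∪ (PC M₁ M₂).O = (M₁.I ∪ M₁.O) ∪ (M₂.I ∪ M₂.O) := by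
  ext v
  simp only [PC, Set.mem_union, Set.mem_sdiff]
  tauto

theorem subset_left (M₁ M₂ : RModule Var Dom) :
    M₁.I ∪ M₁.O ⊆ (PC M₁ M₂).I ∪ (PC M₁ M₂).O :=
  (inputs_union_outputs M₁ M₂).ge.trans' Set.subset_union_left

theorem subset_right (M₁ M₂ : RModule Var Dom) :
    M₂.I ∪ M₂.O ⊆ (PC M₁ M₂).I ∪ (PC M₁ M₂).O :=
  (inputs_union_outputs M₁ M₂).ge.trans' Set.subset_union_right

theorem inputs_union_outputs_assoc (M₁ M₂ M₃ : RModule Var Dom) :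
    (PC (PC M₁ M₂) M₃).I ∪ (PC (PC M₁ M₂) M₃).O = (PC M₁ (PC M₂ M₃)).I ∪ (PC M₁ (PC M₂ M₃)).O := by
  simp only [inputs_union_outputs, Set.union_assoc]

theorem step_iff {M₁ M₂ : RModule Var Dom} {s s' : ∀ v ∈ (PC M₁ M₂).S, Dom v}
    {x : ∀ v ∈ (PC M₁ M₂).I ∪ (PC M₁ M₂).O, Dom v} :
    (PC M₁ M₂).Step s x s' ↔
      M₁.Step (restrictVal Set.subset_union_left s) (restrictVal (subset_left M₁ M₂) x)
        (restrictVal Set.subset_union_left s') ∧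
      M₂.Step (restrictVal Set.subset_union_right s) (restrictVal (subset_right M₁ M₂) x)
        (restrictVal Set.subset_union_right s') := by
  dsimp only [RModule.Step, PC]
  congr! 3 <;> split <;> rfl

end PC

theorem implements_pc_assoc (M₁ M₂ M₃ : RModule Var Dom) :
    Implements (PC (PC M₁ M₂) M₃) (PC M₁ (PC M₂ M₃)) :=
  Implements.of_restrict (Set.union_assoc _ _ _).ge (PC.inputs_union_outputs_assoc M₁ M₂ M₃).ge
    (Set.union_assoc _ _ _).ge (fun _ ⟨⟨h₁, h₂⟩, h₃⟩ => ⟨h₁, h₂, h₃⟩) fun _ _ _ h => by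
      obtain ⟨h₁₂, h₃⟩ := PC.step_iff.1 h
      obtain ⟨h₁, h₂⟩ := PC.step_iff.1 h₁₂
      exact PC.step_iff.2 ⟨h₁, PC.step_iff.2 ⟨h₂, h₃⟩⟩

theorem implements_pc_assoc_symm (M₁ M₂ M₃ : RModule Var Dom) :
    Implements (PC M₁ (PC M₂ M₃)) (PC (PC M₁ M₂) M₃) :=
  Implements.of_restrict (Set.union_assoc _ _ _).le (PC.inputs_union_outputs_assoc M₁ M₂ M₃).le
    (Set.union_assoc _ _ _).le (fun _ ⟨h₁, h₂, h₃⟩ => ⟨⟨h₁, h₂⟩, h₃⟩) fun _ _ _ h => by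
      obtain ⟨h₁, h₂₃⟩ := PC.step_iff.1 h
      obtain ⟨h₂, h₃⟩ := PC.step_iff.1 h₂₃
      exact PC.step_iff.2 ⟨PC.step_iff.2 ⟨h₁, h₂⟩, h₃⟩

theorem pc_assoc_general {Var : Type} {Dom : Var → Type} (M₁ M₂ M₃ : RModule Var Dom) :
    Implements (PC (PC M₁ M₂) M₃) (PC M₁ (PC M₂ M₃)) ∧
    Implements (PC M₁ (PC M₂ M₃)) (PC (PC M₁ M₂) M₃) :=
  ⟨implements_pc_assoc M₁ M₂ M₃, implements_pc_assoc_symm M₁ M₂ M₃⟩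

/-- Parallel composition is associative up to mutual implementation. -/
theorem pc_assoc {Var : Type} {Dom : Var → Type} (M₁ M₂ M₃ : RModule Var Dom)
    (h12 : Compatible M₁ M₂) (h13 : Compatible M₁ M₃) (h23 : Compatible M₂ M₃) :
    Implements (PC (PC M₁ M₂) M₃) (PC M₁ (PC M₂ M₃)) ∧
    Implements (PC M₁ (PC M₂ M₃)) (PC (PC M₁ M₂) M₃) :=
  pc_assoc_general M₁ M₂ M₃
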